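/- arXiv:2405.09068 — 7 statements merged into one kernel-verified Lean document; each statement's English description precedes it below -/
import Mathlib

section
/- For a prime p and positive integers k, l with t = gcd(k,l): gcd(p^k + 1, p^l + 1) = p^t + 1 if both k/t and l/t are odd; gcd(p^k + 1, p^l + 1) = 2 if (k/t is even or l/t is even) and p > 2; and gcd(p^k + 1, p^l + 1) = 1 if (k/t is even or l/t is even) and p = 2. -/
/-!
Put `a = p ^ t`, `m = k / t`, `n = l / t`, so that `m` and `n` are coprime and the two numbers
are `a ^ m + 1` and `a ^ n + 1`. Modulo their gcd `g` we have `a ^ m = a ^ n = -1`, hence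
`(a ^ 2) ^ m = (a ^ 2) ^ n = 1` and, by coprimality, `a ^ 2 = 1`. If `m` is odd this forces
`a = a ^ m = -1`, i.e. `g ∣ a + 1`, while `a + 1` divides both numbers when `m` and `n` are odd.
If `m` is even it forces `1 = a ^ m = -1`, i.e. `g ∣ 2`, and the parity of `p` decides between
`1` and `2`.
-/

theorem sq_eq_one_of_pow_eq_neg_one_of_coprime {M : Type*} [Monoid M] [HasDistribNeg M] {x : M}
    {m n : ℕ} (hmn : m.Coprime n) (hm : x ^ m = -1) (hn : x ^ n = -1) : x ^ 2 = 1 := by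
  have h : (x ^ 2) ^ m.gcd n = 1 :=
    pow_gcd_eq_one.2 ⟨by rw [← pow_mul', pow_mul, hm, neg_one_sq],
      by rw [← pow_mul', pow_mul, hn, neg_one_sq]⟩
  rwa [hmn, pow_one] at h

namespace Nat

theorem cast_pow_eq_neg_one_of_dvd {a m g : ℕ} (h : g ∣ a ^ m + 1) : (a : ZMod g) ^ m = -1 :=
  eq_neg_of_add_eq_zero_left <| by exact_mod_cast (ZMod.natCast_eq_zero_iff _ _).2 h

theorem cast_sq_eq_one_zmod_gcd_pow_add_one {a m n : ℕ} (hmn : m.Coprime n) :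
    (a : ZMod ((a ^ m + 1).gcd (a ^ n + 1))) ^ 2 = 1 :=
  sq_eq_one_of_pow_eq_neg_one_of_coprime hmn (cast_pow_eq_neg_one_of_dvd (gcd_dvd_left _ _))
    (cast_pow_eq_neg_one_of_dvd (gcd_dvd_right _ _))

theorem gcd_pow_add_one_dvd_add_one (a : ℕ) {m n : ℕ} (hmn : m.Coprime n) (hm : Odd m) :
    (a ^ m + 1).gcd (a ^ n + 1) ∣ a + 1 := by
  set g := (a ^ m + 1).gcd (a ^ n + 1)
  have hsq : (a : ZMod g) ^ 2 = 1 := cast_sq_eq_one_zmod_gcd_pow_add_one hmn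
  have hpow : (a : ZMod g) ^ m = -1 := cast_pow_eq_neg_one_of_dvd (gcd_dvd_left _ _)
  obtain ⟨j, rfl⟩ := hm
  have hneg : (a : ZMod g) = -1 := by
    rwa [pow_succ, pow_mul, hsq, one_pow, one_mul] at hpow
  rw [← ZMod.natCast_eq_zero_iff]
  push_cast
  rw [hneg, neg_add_cancel]

theorem gcd_pow_add_one_dvd_two (a : ℕ) {m n : ℕ} (hmn : m.Coprime n) (hm : Even m) :
    (a ^ m + 1).gcd (a ^ n + 1) ∣ 2 := by
  set g := (a ^ m + 1).gcd (a ^ n + 1)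
  have hsq : (a : ZMod g) ^ 2 = 1 := cast_sq_eq_one_zmod_gcd_pow_add_one hmn
  have hpow : (a : ZMod g) ^ m = -1 := cast_pow_eq_neg_one_of_dvd (gcd_dvd_left _ _)
  obtain ⟨j, rfl⟩ := hm
  have hone : (1 : ZMod g) = -1 := by
    rwa [← two_mul, pow_mul, hsq, one_pow] at hpow
  rw [← ZMod.natCast_eq_zero_iff]
  push_cast
  linear_combination hone

theorem gcd_pow_add_one_dvd_two_of_even_or_even (a : ℕ) {m n : ℕ} (hmn : m.Coprime n)
    (h : Even m ∨ Even n) : (a ^ m + 1).gcd (a ^ n + 1) ∣ 2 := by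
  rcases h with hm | hn
  · exact gcd_pow_add_one_dvd_two a hmn hm
  · rw [gcd_comm]
    exact gcd_pow_add_one_dvd_two a hmn.symm hn

theorem gcd_pow_add_one_of_odd_of_odd (a : ℕ) {m n : ℕ} (hmn : m.Coprime n) (hm : Odd m)
    (hn : Odd n) : (a ^ m + 1).gcd (a ^ n + 1) = a + 1 := by
  refine dvd_antisymm (gcd_pow_add_one_dvd_add_one a hmn hm) (dvd_gcd ?_ ?_)
  · simpa using hm.nat_add_dvd_pow_add_pow a 1
  · simpa using hn.nat_add_dvd_pow_add_pow a 1

theorem gcd_pow_add_one_eq_gcd_pow_gcd_pow_div (p k l : ℕ) :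
    (p ^ k + 1).gcd (p ^ l + 1) =
      ((p ^ k.gcd l) ^ (k / k.gcd l) + 1).gcd ((p ^ k.gcd l) ^ (l / k.gcd l) + 1) := by
  rw [← pow_mul, ← pow_mul, Nat.mul_div_cancel' (gcd_dvd_left k l),
    Nat.mul_div_cancel' (gcd_dvd_right k l)]

end Nat

theorem stmt_2_general (p k l : ℕ) (hp : p.Prime) (hk : 0 < k) :
    (Odd (k / Nat.gcd k l) → Odd (l / Nat.gcd k l) →
      Nat.gcd (p ^ k + 1) (p ^ l + 1) = p ^ Nat.gcd k l + 1) ∧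
    ((Even (k / Nat.gcd k l) ∨ Even (l / Nat.gcd k l)) → 2 < p →
      Nat.gcd (p ^ k + 1) (p ^ l + 1) = 2) ∧
    ((Even (k / Nat.gcd k l) ∨ Even (l / Nat.gcd k l)) → p = 2 →
      Nat.gcd (p ^ k + 1) (p ^ l + 1) = 1) := by
  have hmn := Nat.coprime_div_gcd_div_gcd (Nat.gcd_pos_of_pos_left l hk)
  have hg := Nat.gcd_pow_add_one_eq_gcd_pow_gcd_pow_div p k l
  have hdvd_two he := hg ▸ Nat.gcd_pow_add_one_dvd_two_of_even_or_even (p ^ k.gcd l) hmn he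
  refine ⟨fun hm hn => hg ▸ Nat.gcd_pow_add_one_of_odd_of_odd _ hmn hm hn,
    fun he hp2 => ?_, fun he hp2 => ?_⟩
  · have hodd : Odd p := hp.odd_of_ne_two hp2.ne'
    exact Nat.dvd_antisymm (hdvd_two he)
      (Nat.dvd_gcd hodd.pow.add_one.two_dvd hodd.pow.add_one.two_dvd)
  · subst hp2
    have hodd : Odd ((2 ^ k + 1).gcd (2 ^ l + 1)) :=
      (Nat.even_pow.2 ⟨even_two, hk.ne'⟩).add_one.of_dvd_nat (Nat.gcd_dvd_left _ _)
    exact hodd.coprime_two_right.eq_one_of_dvd (hdvd_two he)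

theorem stmt_2 (p k l : ℕ) (hp : p.Prime) (hk : 0 < k) (hl : 0 < l) :
    (Odd (k / Nat.gcd k l) → Odd (l / Nat.gcd k l) →
      Nat.gcd (p ^ k + 1) (p ^ l + 1) = p ^ Nat.gcd k l + 1) ∧
    ((Even (k / Nat.gcd k l) ∨ Even (l / Nat.gcd k l)) → 2 < p →
      Nat.gcd (p ^ k + 1) (p ^ l + 1) = 2) ∧
    ((Even (k / Nat.gcd k l) ∨ Even (l / Nat.gcd k l)) → p = 2 →
      Nat.gcd (p ^ k + 1) (p ^ l + 1) = 1) :=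
  stmt_2_general p k l hp hk
end

section
/- Let L be a finite field and σ a field automorphism of L given by σ(x) = x^q for a prime power q. Let T be the semilinear transformation of L² given by T(x₀, x₁) = (α·σ(x₁), σ(x₀) + β·σ(x₁)) with α ≠ 0. Then T has a nonzero eigenvector, i.e., there exist a nonzero vector v ∈ L² and k ∈ L with T(v) = k·v, if and only if the polynomial P(X) = X^(q+1) − β·X − α has a root in L. -/
/-!
If `v = (x, y)` is an eigenvector with eigenvalue `k`, then `y ≠ 0` (otherwise `x ^ q = 0`), and
eliminating `k` from the two coordinate equations shows that `t = x / y` satisfies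
`t ^ (q + 1) + β t = α`. Since `q` is a power of the characteristic, `(-t) ^ (q + 1) = t ^ (q + 1)`,
so `-t` is a root of `X ^ (q + 1) - β X - α`. Conversely, for a root `X` the vector `(-X, 1)` is an
eigenvector with eigenvalue `β - X ^ q`.
-/

section SemilinearCompanion

variable {K : Type*} [Field K]

/-- The `x ↦ x ^ q`-semilinear map of `K²` with matrix `((0, α), (1, β))`. -/
def semilinearCompanion (q : ℕ) (α β : K) (v : K × K) : K × K :=
  (α * v.2 ^ q, v.1 ^ q + β * v.2 ^ q)

lemma semilinearCompanion_eigen_snd_ne_zero {q : ℕ} (hq : q ≠ 0) {α β k : K} {v : K × K}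
    (hv : v ≠ 0) (hk : semilinearCompanion q α β v = k • v) : v.2 ≠ 0 := by
  intro hy
  have hx : v.1 ^ q = 0 := by
    simpa [semilinearCompanion, hy, zero_pow hq] using congrArg Prod.snd hk
  exact hv (Prod.ext (pow_eq_zero_iff hq |>.mp hx) hy)

lemma semilinearCompanion_eigen_ratio {q : ℕ} (hq : q ≠ 0) {α β k : K} {v : K × K}
    (hv : v ≠ 0) (hk : semilinearCompanion q α β v = k • v) :
    (v.1 / v.2) ^ (q + 1) + β * (v.1 / v.2) = α := by
  have hy := semilinearCompanion_eigen_snd_ne_zero hq hv hk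
  have h₁ : α * v.2 ^ q = k * v.1 := congrArg Prod.fst hk
  have h₂ : v.1 ^ q + β * v.2 ^ q = k * v.2 := congrArg Prod.snd hk
  rw [div_pow, div_add' _ _ _ (pow_ne_zero _ hy), div_eq_iff (pow_ne_zero _ hy)]
  linear_combination v.1 * h₂ - v.2 * h₁ + v.1 * β * v.2 ^ q * mul_inv_cancel₀ hy

lemma semilinearCompanion_neg_one {p : ℕ} [ExpChar K p] (n : ℕ) (α β X : K)
    (hX : X ^ (p ^ n + 1) - β * X - α = 0) :
    semilinearCompanion (p ^ n) α β (-X, 1) = (β - X ^ p ^ n) • (-X, 1) := by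
  have hneg : (-X) ^ p ^ n = -X ^ p ^ n := by
    rw [neg_pow, neg_one_pow_expChar_pow, neg_one_mul]
  simp only [semilinearCompanion, one_pow, mul_one, hneg, Prod.smul_mk, smul_eq_mul,
    Prod.mk.injEq]
  constructor
  · linear_combination -hX
  · ring

theorem exists_semilinearCompanion_eigen_iff {p : ℕ} [ExpChar K p] (n : ℕ) (α β : K) :
    (∃ v : K × K, v ≠ 0 ∧ ∃ k : K, semilinearCompanion (p ^ n) α β v = k • v) ↔
      ∃ X : K, X ^ (p ^ n + 1) - β * X - α = 0 := by
  have hq : p ^ n ≠ 0 := pow_ne_zero n (expChar_pos K p).ne'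
  constructor
  · rintro ⟨v, hv, k, hk⟩
    refine ⟨-(v.1 / v.2), ?_⟩
    have hsign : (-(v.1 / v.2)) ^ (p ^ n + 1) = (v.1 / v.2) ^ (p ^ n + 1) := by
      rw [neg_pow, pow_succ, neg_one_pow_expChar_pow, neg_one_mul, neg_neg, one_mul]
    rw [hsign, ← semilinearCompanion_eigen_ratio hq hv hk]
    ring
  · rintro ⟨X, hX⟩
    exact ⟨(-X, 1), by simp, _, semilinearCompanion_neg_one n α β X hX⟩

end SemilinearCompanion

theorem stmt_3_general {L : Type*} [Field L] [Fintype L] (q : ℕ)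
    (hq : ∃ n : ℕ, q = ringChar L ^ n) (α β : L) :
    (∃ v : L × L, v ≠ 0 ∧ ∃ k : L,
        ((α * v.2 ^ q, v.1 ^ q + β * v.2 ^ q) : L × L) = k • v) ↔
      ∃ X : L, X ^ (q + 1) - β * X - α = 0 := by
  obtain ⟨n, rfl⟩ := hq
  have : Fact (ringChar L).Prime := ⟨CharP.char_is_prime L (ringChar L)⟩
  exact exists_semilinearCompanion_eigen_iff n α β

theorem stmt_3 {L : Type*} [Field L] [Fintype L] (q : ℕ)
    (hq : ∃ n : ℕ, q = ringChar L ^ n) (α β : L) (hα : α ≠ 0) :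
    (∃ v : L × L, v ≠ 0 ∧ ∃ k : L,
        ((α * v.2 ^ q, v.1 ^ q + β * v.2 ^ q) : L × L) = k • v) ↔
      ∃ X : L, X ^ (q + 1) - β * X - α = 0 :=
  stmt_3_general q hq α β
end

section
/- Let L = F_{p^m} with p odd, σ(x) = x^(p^k), τ(x) = x^(p^l) automorphisms of L, and suppose m/gcd(m,k,l) is such that gcd(m,l)/gcd(m,k,l) is odd or k ≡ 0 (mod m). If α ∈ L* is a non-square, then for every a ∈ L* the polynomial a^(p^l)·X^(p^k+1) − a·α has no root in L. -/
theorem IsSquare.of_pow_mul_pow_eq_mul {R : Type*} [CommMonoidWithZero R] [IsCancelMulZero R]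
    {a x α : R} {i j : ℕ} (ha : a ≠ 0) (hi : Odd i) (hj : Even j) (h : a ^ i * x ^ j = a * α) :
    IsSquare α := by
  obtain ⟨t, rfl⟩ := hi
  have hα : α = a ^ (2 * t) * x ^ j := mul_left_cancel₀ ha (by rw [← h, pow_succ', mul_assoc])
  exact hα ▸ ((even_two_mul t).isSquare_pow a).mul (hj.isSquare_pow x)

theorem stmt_7_general (p k l : ℕ) (hodd : Odd p)
    {L : Type*} [Field L]
    (α : L) (hns : ¬ ∃ β : L, α = β ^ 2) :
    ∀ a : L, a ≠ 0 → ∀ X : L, a ^ p ^ l * X ^ (p ^ k + 1) - a * α ≠ 0 := by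
  intro a ha X h
  obtain ⟨β, hβ⟩ := IsSquare.of_pow_mul_pow_eq_mul ha hodd.pow hodd.pow.add_one (sub_eq_zero.mp h)
  exact hns ⟨β, hβ.trans (sq β).symm⟩

theorem stmt_7 (p m k l : ℕ) (hp : p.Prime) (hodd : Odd p) (hk : k < m) (hl : l < m)
    (hcond : k = 0 ∨ Odd (Nat.gcd m l / Nat.gcd m (Nat.gcd k l)))
    {L : Type*} [Field L] [Fintype L] (hL : Fintype.card L = p ^ m)
    (α : L) (hα : α ≠ 0) (hns : ¬ ∃ β : L, α = β ^ 2) :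
    ∀ a : L, a ≠ 0 → ∀ X : L, a ^ p ^ l * X ^ (p ^ k + 1) - a * α ≠ 0 :=
  stmt_7_general p k l hodd α hns
end

section
/- Let L = F_{p^m} with m > 2 and (p, m) ≠ (2, 6). Then there exists a prime p' dividing p^m − 1 that does not divide p^t − 1 for any 1 ≤ t < m (a p-primitive prime divisor of p^m − 1). -/
/-!
Suppose no prime factor of `p ^ m - 1` is primitive, and let `r` be a prime factor of `Φ_m(p)`.
Since `p` is a primitive root of unity of order `m / r ^ v_r(m)` modulo `r`, we get
`m = r ^ k * ord_r(p)` with `k ≥ 1` and `ord_r(p) ∣ r - 1`, so `r` is the largest prime factor of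
`m`. Hence `Φ_m(p)` is a power of this one prime, and `Φ_m(p) ∣ 1 + y + ⋯ + y ^ (r - 1)` with
`y = p ^ (m / r) ≡ 1 [MOD r]` shows `r ^ 2 ∤ Φ_m(p)`, i.e. `Φ_m(p) = r`. Finally, writing
`m = e * r ^ (j + 1)` and `Y = p ^ r ^ j`, the identity `Φ_m(p) Φ_e(Y) = Φ_e(Y ^ r)` together with
`(z - 1) ^ φ(e) ≤ Φ_e(z) ≤ (z + 1) ^ φ(e)` forces `Y ^ r - 1 ≤ r (Y + 1)`, which leaves only
`p = 2`, `m = 6`.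
-/

open Polynomial
open scoped Nat

theorem Int.natCast_dvd_pow_sub_one_iff_orderOf_dvd (r : ℕ) (x : ℤ) (n : ℕ) :
    (r : ℤ) ∣ x ^ n - 1 ↔ orderOf (x : ZMod r) ∣ n := by
  rw [orderOf_dvd_iff_pow_eq_one, ← ZMod.intCast_zmod_eq_zero_iff_dvd, Int.cast_sub, Int.cast_pow,
    Int.cast_one, sub_eq_zero]

theorem Nat.dvd_pow_sub_one_iff_orderOf_dvd {r x : ℕ} (hx : x ≠ 0) (n : ℕ) :
    r ∣ x ^ n - 1 ↔ orderOf (x : ZMod r) ∣ n := by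
  rw [← Int.natCast_dvd_natCast, Nat.cast_sub (Nat.one_le_pow _ _ (Nat.pos_of_ne_zero hx)),
    Nat.cast_pow, Nat.cast_one, Int.natCast_dvd_pow_sub_one_iff_orderOf_dvd, Int.cast_natCast]

theorem Int.not_sq_dvd_geom_sum {r : ℕ} {y : ℤ} (hr : r.Prime) (hy : (r : ℤ) ∣ y - 1)
    (h2 : r = 2 → 4 ∣ y - 1) : ¬(r : ℤ) ^ 2 ∣ ∑ i ∈ Finset.range r, y ^ i := by
  obtain rfl | hodd := hr.eq_two_or_odd'
  · have := h2 rfl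
    simp only [Finset.sum_range_succ, Finset.sum_range_zero, pow_zero, pow_one, Nat.cast_ofNat]
    omega
  · have hrZ : Prime (r : ℤ) := Nat.prime_iff_prime_int.mp hr
    have hry : ¬(r : ℤ) ∣ y := fun hdy =>
      hrZ.not_dvd_one (by simpa using dvd_sub hdy hy)
    have := emultiplicity_geom_sum₂_eq_one hrZ hodd (by simpa using hy) hry
    simp only [one_pow, mul_one] at this
    rw [pow_dvd_iff_le_emultiplicity, this]
    norm_num

theorem Nat.eq_two_or_eq_three_of_pow_le_mul_add_one_add_one {Y r : ℕ} (hY : 2 ≤ Y)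
    (hr : 2 ≤ r) (h : Y ^ r ≤ r * (Y + 1) + 1) : r = 2 ∧ Y ≤ 3 ∨ r = 3 ∧ Y = 2 := by
  have hY2 : 2 * Y ≤ Y ^ 2 := by nlinarith
  obtain rfl | rfl | hr4 : r = 2 ∨ r = 3 ∨ 4 ≤ r := by omega
  · left; constructor <;> nlinarith
  · right; constructor <;> nlinarith [pow_succ Y 2]
  · exfalso
    suffices ∀ r, 4 ≤ r → r * (Y + 1) + 1 < Y ^ r from (this r hr4).not_ge h
    intro r hr4
    induction r, hr4 using Nat.le_induction with
    | base => nlinarith [pow_succ Y 2, pow_succ Y 3]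
    | succ r hr4 ih => nlinarith [pow_succ Y r]

namespace Polynomial

theorem cyclotomic_dvd_geom_sum_X_pow {R : Type*} [CommRing R] [IsDomain R] {d n : ℕ}
    (h : d ∈ n.properDivisors) :
    cyclotomic n R ∣ ∑ i ∈ Finset.range (n / d), (X ^ d) ^ i := by
  obtain ⟨hdn, hlt⟩ := Nat.mem_properDivisors.mp h
  have hd : 0 < d := Nat.pos_of_dvd_of_pos hdn (by omega)
  rw [← mul_dvd_mul_iff_left (by simpa using X_pow_sub_C_ne_zero hd (1 : R)), mul_geom_sum,
    ← pow_mul, Nat.mul_div_cancel' hdn]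
  exact X_pow_sub_one_mul_cyclotomic_dvd_X_pow_sub_one_of_dvd R h

theorem expand_prime_pow_cyclotomic {R : Type*} [CommRing R] {r n : ℕ} (hr : r.Prime)
    (hrn : r ∣ n) (j : ℕ) : expand R (r ^ j) (cyclotomic n R) = cyclotomic (n * r ^ j) R := by
  induction j with
  | zero => simp
  | succ j ih =>
    rw [pow_succ', expand_mul, ih, cyclotomic_expand_eq_cyclotomic hr (hrn.mul_right _),
      mul_assoc, mul_comm (r ^ j)]

theorem cyclotomic_mul_prime_pow_eval_mul {R : Type*} [CommRing R] {r e : ℕ} (hr : r.Prime)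
    (hre : ¬r ∣ e) (x : R) (j : ℕ) :
    (cyclotomic (e * r ^ (j + 1)) R).eval x * (cyclotomic e R).eval (x ^ r ^ j) =
      (cyclotomic e R).eval (x ^ r ^ (j + 1)) := by
  have h := congrArg (eval (x ^ r ^ j)) (cyclotomic_expand_eq_cyclotomic_mul hr hre R)
  rw [expand_eval, eval_mul] at h
  rw [pow_succ', ← mul_assoc, ← expand_prime_pow_cyclotomic hr (dvd_mul_left r e), expand_eval,
    pow_mul', h]

theorem sub_one_pow_totient_le_cyclotomic_eval_mul {r e : ℕ} (hr : r.Prime) (hre : ¬r ∣ e)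
    {x : ℝ} (hx : 1 < x) (j : ℕ) :
    (x ^ r ^ (j + 1) - 1) ^ φ e ≤
      (cyclotomic (e * r ^ (j + 1)) ℝ).eval x * (x ^ r ^ j + 1) ^ φ e :=
  calc (x ^ r ^ (j + 1) - 1) ^ φ e ≤ (cyclotomic e ℝ).eval (x ^ r ^ (j + 1)) :=
        sub_one_pow_totient_le_cyclotomic_eval (one_lt_pow₀ hx (pow_pos hr.pos _).ne') e
    _ = (cyclotomic (e * r ^ (j + 1)) ℝ).eval x * (cyclotomic e ℝ).eval (x ^ r ^ j) :=
        (cyclotomic_mul_prime_pow_eval_mul hr hre x j).symm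
    _ ≤ _ := mul_le_mul_of_nonneg_left
        (cyclotomic_eval_le_add_one_pow_totient (one_lt_pow₀ hx (pow_pos hr.pos _).ne') e)
        (cyclotomic_nonneg _ hx.le)

theorem pow_le_of_cyclotomic_eval_eq_prime {x r e j : ℕ} (hx : 2 ≤ x) (hr : r.Prime)
    (he : e ≠ 0) (hre : ¬r ∣ e) (hΦ : (cyclotomic (e * r ^ (j + 1)) ℤ).eval (x : ℤ) = r) :
    (x ^ r ^ j) ^ r ≤ r * (x ^ r ^ j + 1) + 1 := by
  have hs : φ e ≠ 0 := (Nat.totient_pos.mpr (Nat.pos_of_ne_zero he)).ne'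
  have hΦℝ : (cyclotomic (e * r ^ (j + 1)) ℝ).eval (x : ℝ) = r := by
    simpa [hΦ] using cyclotomic.eval_apply (x : ℤ) (e * r ^ (j + 1)) (Int.castRingHom ℝ)
  have hbound := sub_one_pow_totient_le_cyclotomic_eval_mul hr hre
    (x := (x : ℝ)) (by exact_mod_cast hx) j
  rw [hΦℝ] at hbound
  have hreal : (x : ℝ) ^ r ^ (j + 1) - 1 ≤ r * ((x : ℝ) ^ r ^ j + 1) := by
    refine le_of_pow_le_pow_left₀ hs (by positivity) (hbound.trans ?_)
    rw [mul_pow]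
    gcongr
    exact le_self_pow₀ (by exact_mod_cast hr.one_lt.le) hs
  rw [pow_succ', pow_mul'] at hreal
  have : (((x ^ r ^ j) ^ r : ℕ) : ℝ) ≤ ((r * (x ^ r ^ j + 1) + 1 : ℕ) : ℝ) := by
    push_cast
    linarith
  exact_mod_cast this

section PrimeDivisors

variable {r n : ℕ} {x : ℤ}

theorem orderOf_eq_ordCompl_of_dvd_cyclotomic_eval (hr : r.Prime) (hn : n ≠ 0)
    (h : (r : ℤ) ∣ (cyclotomic n ℤ).eval x) : orderOf (x : ZMod r) = ordCompl[r] n := by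
  have := Fact.mk hr
  have : NeZero ((ordCompl[r] n : ℕ) : ZMod r) :=
    NeZero.of_not_dvd (ZMod r) (Nat.not_dvd_ordCompl hr hn)
  have hroot :
      (cyclotomic (r ^ n.factorization r * ordCompl[r] n) (ZMod r)).IsRoot (x : ZMod r) := by
    rw [Nat.ordProj_mul_ordCompl_eq_self, IsRoot.def, ← eq_intCast (Int.castRingHom (ZMod r)),
      cyclotomic.eval_apply, eq_intCast, ZMod.intCast_zmod_eq_zero_iff_dvd]
    exact h
  exact (isRoot_cyclotomic_prime_pow_mul_iff_of_charP.mp hroot).eq_orderOf.symm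

theorem orderOf_dvd_sub_one_of_dvd_cyclotomic_eval (hr : r.Prime) (hn : n ≠ 0)
    (h : (r : ℤ) ∣ (cyclotomic n ℤ).eval x) : orderOf (x : ZMod r) ∣ r - 1 := by
  have := Fact.mk hr
  refine ZMod.orderOf_dvd_card_sub_one fun hx0 => ?_
  have hord := orderOf_eq_ordCompl_of_dvd_cyclotomic_eval hr hn h
  rw [hx0, orderOf_zero] at hord
  exact Nat.pos_iff_ne_zero.mp (Nat.ordCompl_pos r hn) hord.symm

theorem isGreatest_primeFactors_of_dvd_cyclotomic_eval (hr : r.Prime) (hn : n ≠ 0)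
    (h : (r : ℤ) ∣ (cyclotomic n ℤ).eval x) (hord : orderOf (x : ZMod r) ≠ n) :
    IsGreatest (n.primeFactors : Set ℕ) r := by
  have he := orderOf_eq_ordCompl_of_dvd_cyclotomic_eval hr hn h
  have hrn : r ∣ n := by
    by_contra hrn
    rw [he, Nat.factorization_eq_zero_of_not_dvd hrn, pow_zero, Nat.div_one] at hord
    exact hord rfl
  refine ⟨Nat.mem_primeFactors.mpr ⟨hr, hrn, hn⟩, fun q hq => ?_⟩
  obtain ⟨hq, hqn, -⟩ := Nat.mem_primeFactors.mp hq
  obtain rfl | hqr := eq_or_ne q r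
  · exact le_rfl
  -- every prime factor of `n` other than `r` divides `ordCompl[r] n = orderOf x ∣ r - 1`
  have hqe : q ∣ ordCompl[r] n := by
    rw [← Nat.ordProj_mul_ordCompl_eq_self n r] at hqn
    exact (((Nat.coprime_primes hq hr).mpr hqr).pow_right _).dvd_of_dvd_mul_left hqn
  rw [← he] at hqe
  have := Nat.le_of_dvd (Nat.sub_pos_of_lt hr.one_lt)
    (hqe.trans (orderOf_dvd_sub_one_of_dvd_cyclotomic_eval hr hn h))
  omega

theorem not_sq_dvd_cyclotomic_eval (hr : r.Prime) (hn : n ≠ 0) (hrn : r ∣ n)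
    (hx : (r : ℤ) ∣ x ^ (n / r) - 1) (h4 : r = 2 → 4 ∣ n) :
    ¬(r : ℤ) ^ 2 ∣ (cyclotomic n ℤ).eval x := by
  have hmem : n / r ∈ n.properDivisors :=
    Nat.mem_properDivisors.mpr ⟨Nat.div_dvd_of_dvd hrn, Nat.div_lt_self (by omega) hr.one_lt⟩
  have hdvd := eval_dvd (x := x) (cyclotomic_dvd_geom_sum_X_pow (R := ℤ) hmem)
  rw [Nat.div_div_self hrn hn] at hdvd
  simp only [eval_finsetSum, eval_pow, eval_X] at hdvd
  refine fun hsq => Int.not_sq_dvd_geom_sum hr hx (fun hr2 => ?_) (hsq.trans hdvd)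
  -- for `r = 2`, `x ^ (n / 2)` is an odd square
  subst hr2
  obtain ⟨k, rfl⟩ := h4 rfl
  rw [show 4 * k / 2 = 2 * k by omega] at hx ⊢
  have hodd : Odd (x ^ (2 * k)) :=
    Int.not_even_iff_odd.mp (Int.even_sub_one.mp (even_iff_two_dvd.mpr hx))
  have hxodd : Odd x := (Int.odd_pow.mp hodd).resolve_right (by omega)
  rw [pow_mul']
  exact dvd_trans (by norm_num) (Int.eight_dvd_sq_sub_one_of_odd hxodd.pow)

theorem not_sq_dvd_cyclotomic_eval_of_orderOf_ne (hr : r.Prime) (hn : 2 < n)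
    (h : (r : ℤ) ∣ (cyclotomic n ℤ).eval x) (hord : orderOf (x : ZMod r) ≠ n) :
    ¬(r : ℤ) ^ 2 ∣ (cyclotomic n ℤ).eval x := by
  have hn0 : n ≠ 0 := by omega
  have he := orderOf_eq_ordCompl_of_dvd_cyclotomic_eval hr hn0 h
  have hrn : r ∣ n := (Nat.mem_primeFactors.mp
    (isGreatest_primeFactors_of_dvd_cyclotomic_eval hr hn0 h hord).1).2.1
  refine not_sq_dvd_cyclotomic_eval hr hn0 hrn ?_ fun hr2 => ?_
  · rw [Int.natCast_dvd_pow_sub_one_iff_orderOf_dvd, he]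
    refine Nat.dvd_div_of_mul_dvd ?_
    rw [mul_comm]
    conv_rhs => rw [← Nat.ordProj_mul_ordCompl_eq_self n r, mul_comm]
    exact mul_dvd_mul_left _ (dvd_pow_self r (hr.factorization_pos_of_dvd hn0 hrn).ne')
  · subst hr2
    have he1 : ordCompl[2] n = 1 := by
      simpa [he] using orderOf_dvd_sub_one_of_dvd_cyclotomic_eval hr hn0 h
    have hpow : n = 2 ^ n.factorization 2 := by
      simpa [he1] using (Nat.ordProj_mul_ordCompl_eq_self n 2).symm
    rw [hpow] at hn ⊢
    have hk : 2 ≤ n.factorization 2 := by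
      by_contra! hk
      have := Nat.pow_le_pow_right two_pos (Nat.le_of_lt_succ hk)
      omega
    exact (pow_dvd_pow 2 hk : 2 ^ 2 ∣ _)

end PrimeDivisors

theorem exists_prime_eq_cyclotomic_eval {x m : ℕ} (hx : 2 ≤ x) (hm : 2 < m)
    (h : ∀ r : ℕ, r.Prime → (r : ℤ) ∣ (cyclotomic m ℤ).eval (x : ℤ) →
      orderOf (x : ZMod r) ≠ m) :
    ∃ r : ℕ, r.Prime ∧ (cyclotomic m ℤ).eval (x : ℤ) = r := by
  set Φ := (cyclotomic m ℤ).eval (x : ℤ)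
  have hm0 : m ≠ 0 := by omega
  have hΦpos : 0 < Φ := cyclotomic_pos' m (by exact_mod_cast hx)
  have hΦ1 : 1 < Φ.natAbs :=
    (Nat.sub_le_sub_right hx 1).trans_lt (sub_one_lt_natAbs_cyclotomic_eval (by omega) (by omega))
  have hgreat : ∀ r, r.Prime → r ∣ Φ.natAbs → IsGreatest (m.primeFactors : Set ℕ) r := by
    intro r hr hrΦ
    rw [← Int.natCast_dvd] at hrΦ
    exact isGreatest_primeFactors_of_dvd_cyclotomic_eval hr hm0 hrΦ (by simpa using h r hr hrΦ)
  set r := Φ.natAbs.minFac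
  have hr : r.Prime := Nat.minFac_prime (by omega)
  have hrΦ : (r : ℤ) ∣ Φ := Int.natCast_dvd.mpr (Nat.minFac_dvd _)
  have hpow : Φ.natAbs = r ^ Φ.natAbs.primeFactorsList.length :=
    Nat.eq_prime_pow_of_unique_prime_dvd (by omega) fun hd hdΦ =>
      (hgreat _ hd hdΦ).unique (hgreat r hr (Nat.minFac_dvd _))
  have hsq : ¬r ^ 2 ∣ Φ.natAbs := by
    rw [← Int.natCast_dvd, Nat.cast_pow]
    exact not_sq_dvd_cyclotomic_eval_of_orderOf_ne hr hm hrΦ (by simpa using h r hr hrΦ)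
  set a := Φ.natAbs.primeFactorsList.length
  have ha2 : a < 2 := by
    by_contra! ha
    exact hsq (hpow ▸ pow_dvd_pow r ha)
  have ha0 : a ≠ 0 := by
    intro ha
    rw [ha, pow_zero] at hpow
    omega
  refine ⟨r, hr, ?_⟩
  rw [← Int.natAbs_of_nonneg hΦpos.le, hpow, show a = 1 by omega, pow_one]

theorem eq_two_and_eq_six_of_cyclotomic_eval_eq_prime {x m r : ℕ} (hx : 2 ≤ x) (hm : 2 < m)
    (hr : r.Prime) (hΦ : (cyclotomic m ℤ).eval (x : ℤ) = r)
    (hord : orderOf (x : ZMod r) ≠ m) :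
    x = 2 ∧ m = 6 := by
  have hm0 : m ≠ 0 := by omega
  have hrΦ : (r : ℤ) ∣ (cyclotomic m ℤ).eval (x : ℤ) := hΦ ▸ dvd_rfl
  rw [← Int.cast_natCast] at hord
  have he := orderOf_eq_ordCompl_of_dvd_cyclotomic_eval hr hm0 hrΦ
  have her := orderOf_dvd_sub_one_of_dvd_cyclotomic_eval hr hm0 hrΦ
  have hrm : r ∣ m := (Nat.mem_primeFactors.mp
    (isGreatest_primeFactors_of_dvd_cyclotomic_eval hr hm0 hrΦ hord).1).2.1
  set e := ordCompl[r] m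
  obtain ⟨j, hj⟩ := Nat.exists_eq_add_one_of_ne_zero (hr.factorization_pos_of_dvd hm0 hrm).ne'
  have hme : m = e * r ^ (j + 1) := by
    rw [← hj, mul_comm]
    exact (Nat.ordProj_mul_ordCompl_eq_self m r).symm
  set Y := x ^ r ^ j
  have hxY : x ≤ Y := Nat.le_self_pow (pow_pos hr.pos _).ne' x
  have hY : Y ^ r ≤ r * (Y + 1) + 1 := pow_le_of_cyclotomic_eval_eq_prime hx hr
    (Nat.ordCompl_pos r hm0).ne' (Nat.not_dvd_ordCompl hr hm0) (hme ▸ hΦ)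
  obtain ⟨rfl, hY3⟩ | ⟨rfl, hY2⟩ :=
    Nat.eq_two_or_eq_three_of_pow_le_mul_add_one_add_one (hx.trans hxY) hr.two_le hY
  · have he1 : e = 1 := Nat.dvd_one.mp (he ▸ her)
    have hj0 : j ≠ 0 := by
      rintro rfl
      simp [hme, he1] at hm
    have : x ^ 2 ≤ Y := Nat.pow_le_pow_right (by omega) (Nat.le_self_pow hj0 2)
    nlinarith
  · have hx2 : x = 2 := by omega
    subst hx2
    have h3 : 3 ^ j = 1 := Nat.pow_right_injective le_rfl (hY2.trans (pow_one 2).symm)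
    have hj0 : j = 0 := by simpa using h3
    have he2 : e = 2 := by
      rw [← he]
      exact orderOf_eq_prime (by decide) (by decide)
    exact ⟨rfl, by rw [hme, he2, hj0]; norm_num⟩

end Polynomial

theorem stmt_11 (p m : ℕ) (hp : p.Prime) (hm : 2 < m) (hpm : ¬(p = 2 ∧ m = 6)) :
    ∃ p' : ℕ, p'.Prime ∧ p' ∣ p ^ m - 1 ∧
      ∀ t : ℕ, 1 ≤ t → t < m → ¬ p' ∣ p ^ t - 1 := by
  by_contra! hnone
  have hord : ∀ r : ℕ, r.Prime → orderOf (p : ZMod r) ≠ m := by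
    intro r hr hrm
    obtain ⟨t, ht1, htm, hrt⟩ :=
      hnone r hr ((Nat.dvd_pow_sub_one_iff_orderOf_dvd hp.ne_zero m).mpr hrm.dvd)
    rw [Nat.dvd_pow_sub_one_iff_orderOf_dvd hp.ne_zero, hrm] at hrt
    exact (Nat.le_of_dvd ht1 hrt).not_gt htm
  obtain ⟨r, hr, hΦ⟩ := exists_prime_eq_cyclotomic_eval hp.two_le hm fun r hr _ => hord r hr
  exact hpm (eq_two_and_eq_six_of_cyclotomic_eval_eq_prime hp.two_le hm hr hΦ (hord r hr))
end

section
/- Let L = F_{p^m}, σ(x) = x^(p^k), τ(x) = x^(p^l), k ≠ 0, with gcd(m,l)/gcd(m,k,l) even. Set e = gcd(m,k,l). Then gcd(p^k + 1, p^l − 1, p^m − 1) = p^e + 1, and hence there exists α ∈ L* that is not a (p^e + 1)-st power if and only if p^e + 1 > 1 (which always holds); moreover α ∈ L* is in L^{σ+1}·L^{τ−1} if and only if α is a (p^e + 1)-st power in L*. -/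
/-!
Put `g = gcd(l, m)` and `d = gcd(k, g) = e`, so that `gcd(p^l - 1, p^m - 1) = p^g - 1`. As `g/d` is
even and coprime to `k/d`, the quotient `k/d` is odd; hence `p^d + 1` divides `p^k + 1` and, via
`p^(2d) - 1`, also `p^g - 1`. Conversely a common divisor `n` of `p^k + 1` and `p^g - 1` divides
`p^(gcd(2k, g)) - 1`, hence `p^(2d) - 1`; modulo `n` the element `x = p^d` then satisfies `x^2 = 1`
and `x^(k/d) = -1`, so `x = -1`.

In a commutative group the products `x^a * y^b` are exactly the `gcd(a, b)`-th powers (Bézout),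
and in `Lˣ` the exponent `|Lˣ| = p^m - 1` may be added to the gcd. So `L^(σ+1) * L^(τ-1)` is the
group of `(p^e + 1)`-th powers, a proper subgroup of the cyclic group `Lˣ` because
`p^e + 1 > 1` divides its order.
-/

theorem eq_neg_one_of_sq_eq_one_of_odd_pow_eq_neg_one {M : Type*} [Monoid M] [HasDistribNeg M]
    {x : M} {t : ℕ} (ht : Odd t) (hsq : x ^ 2 = 1) (hxt : x ^ t = -1) : x = -1 := by
  obtain ⟨j, rfl⟩ := ht
  rwa [pow_succ, pow_mul, hsq, one_pow, one_mul] at hxt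

namespace Nat

theorem add_one_dvd_sq_sub_one (x : ℕ) : x + 1 ∣ x ^ 2 - 1 := by
  rw [← one_pow 2, pow_two_sub_pow_two, one_pow]
  exact dvd_mul_right _ _

theorem dvd_add_one_of_dvd_sq_sub_one_of_dvd_pow_add_one {n x t : ℕ} (hx : 0 < x) (ht : Odd t)
    (hsq : n ∣ x ^ 2 - 1) (hxt : n ∣ x ^ t + 1) : n ∣ x + 1 := by
  have hsq' : (x : ZMod n) ^ 2 = 1 := by
    rw [← ZMod.natCast_eq_zero_iff, cast_sub (one_le_pow _ _ hx)] at hsq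
    push_cast at hsq
    exact sub_eq_zero.mp hsq
  have hxt' : (x : ZMod n) ^ t = -1 := by
    rw [← ZMod.natCast_eq_zero_iff] at hxt
    push_cast at hxt
    exact eq_neg_of_add_eq_zero_left hxt
  rw [← ZMod.natCast_eq_zero_iff]
  push_cast
  rw [eq_neg_one_of_sq_eq_one_of_odd_pow_eq_neg_one ht hsq' hxt', neg_add_cancel]

theorem gcd_pow_add_one_pow_sub_one {p k g : ℕ} (hp : 0 < p) (hk : 0 < k)
    (heven : Even (g / k.gcd g)) :
    gcd (p ^ k + 1) (p ^ g - 1) = p ^ k.gcd g + 1 := by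
  set d := k.gcd g
  have hd : 0 < d := gcd_pos_of_pos_left g hk
  have hcop : Coprime (k / d) (g / d) := coprime_div_gcd_div_gcd hd
  have hodd : Odd (k / d) := (hcop.coprime_dvd_right heven.two_dvd).symm.odd_of_left
  have hkd : k = d * (k / d) := (Nat.mul_div_cancel' (gcd_dvd_left k g)).symm
  have h2d : p ^ d + 1 ∣ p ^ g - 1 := by
    refine (add_one_dvd_sq_sub_one _).trans ?_
    rw [← pow_mul]
    exact pow_sub_one_dvd_pow_sub_one p (mul_dvd_of_dvd_div (gcd_dvd_right k g) heven.two_dvd)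
  refine dvd_antisymm ?_ (dvd_gcd ?_ h2d)
  · apply dvd_add_one_of_dvd_sq_sub_one_of_dvd_pow_add_one (pow_pos hp d) hodd
    · have h2k : gcd (2 * k) g ∣ 2 * d := by
        rw [← gcd_mul_left]
        exact dvd_gcd (gcd_dvd_left _ _) ((gcd_dvd_right _ _).trans (dvd_mul_left g 2))
      calc gcd (p ^ k + 1) (p ^ g - 1)
          ∣ gcd ((p ^ k) ^ 2 - 1) (p ^ g - 1) :=
            gcd_dvd_gcd_of_dvd_left _ (add_one_dvd_sq_sub_one _)
        _ = p ^ gcd (2 * k) g - 1 := by rw [← pow_mul, mul_comm k 2, pow_sub_one_gcd_pow_sub_one]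
        _ ∣ (p ^ d) ^ 2 - 1 := by
          rw [← pow_mul, mul_comm d 2]
          exact pow_sub_one_dvd_pow_sub_one p h2k
    · rw [← pow_mul, ← hkd]
      exact gcd_dvd_left _ _
  · simpa only [one_pow, ← pow_mul, ← hkd] using hodd.nat_add_dvd_pow_add_pow (p ^ d) 1

end Nat

section powMonoidHom

variable {G : Type*} [CommGroup G]

theorem range_powMonoidHom_le_of_dvd {m n : ℕ} (h : m ∣ n) :
    (powMonoidHom n : G →* G).range ≤ (powMonoidHom m).range := by
  obtain ⟨c, rfl⟩ := h
  rintro _ ⟨x, rfl⟩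
  exact ⟨x ^ c, by simp only [powMonoidHom_apply, ← pow_mul, mul_comm]⟩

theorem range_powMonoidHom_sup_range_powMonoidHom (a b : ℕ) :
    (powMonoidHom a : G →* G).range ⊔ (powMonoidHom b).range =
      (powMonoidHom (a.gcd b)).range := by
  refine le_antisymm (sup_le (range_powMonoidHom_le_of_dvd (Nat.gcd_dvd_left a b))
    (range_powMonoidHom_le_of_dvd (Nat.gcd_dvd_right a b))) ?_
  rintro _ ⟨w, rfl⟩
  have ha : w ^ a ∈ (powMonoidHom a : G →* G).range ⊔ (powMonoidHom b).range :=
    Subgroup.mem_sup_left ⟨w, rfl⟩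
  have hb : w ^ b ∈ (powMonoidHom a : G →* G).range ⊔ (powMonoidHom b).range :=
    Subgroup.mem_sup_right ⟨w, rfl⟩
  have hbezout : w ^ a.gcd b = (w ^ a) ^ a.gcdA b * (w ^ b) ^ a.gcdB b := by
    rw [← zpow_natCast, Nat.gcd_eq_gcd_ab, zpow_add, zpow_mul, zpow_mul, zpow_natCast,
      zpow_natCast]
  rw [powMonoidHom_apply, hbezout]
  exact mul_mem (zpow_mem ha _) (zpow_mem hb _)

theorem range_powMonoidHom_eq_range_gcd {N : ℕ} (hN : ∀ g : G, g ^ N = 1) (n : ℕ) :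
    (powMonoidHom n : G →* G).range = (powMonoidHom (n.gcd N)).range := by
  have hbot : (powMonoidHom N : G →* G).range = ⊥ :=
    MonoidHom.range_eq_bot_iff.mpr (MonoidHom.ext hN)
  rw [← range_powMonoidHom_sup_range_powMonoidHom, hbot, sup_bot_eq]

theorem IsCyclic.range_powMonoidHom_ne_top [IsCyclic G] [Finite G] {d : ℕ}
    (hd : d ∣ Nat.card G) (hd1 : d ≠ 1) : (powMonoidHom d : G →* G).range ≠ ⊤ := by
  intro htop
  have := IsCyclic.index_powMonoidHom_range G d
  rw [htop, Subgroup.index_top, Nat.gcd_eq_right hd] at this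
  exact hd1 this.symm

end powMonoidHom

section GroupWithZero

variable {M : Type*} [CommGroupWithZero M] {α : M}

theorem Units.mk0_mem_range_powMonoidHom_iff (hα : α ≠ 0) (n : ℕ) :
    Units.mk0 α hα ∈ (powMonoidHom n : Mˣ →* Mˣ).range ↔
      ∃ w : M, w ≠ 0 ∧ α = w ^ n := by
  constructor
  · rintro ⟨w, hw⟩
    exact ⟨w, w.ne_zero, by simpa using congrArg Units.val hw.symm⟩
  · rintro ⟨w, hw0, rfl⟩
    exact ⟨Units.mk0 w hw0, Units.ext (by simp)⟩

theorem Units.mk0_mem_range_powMonoidHom_sup_iff (hα : α ≠ 0) (a b : ℕ) :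
    Units.mk0 α hα ∈ (powMonoidHom a : Mˣ →* Mˣ).range ⊔ (powMonoidHom b).range ↔
      ∃ x y : M, x ≠ 0 ∧ y ≠ 0 ∧ α = x ^ a * y ^ b := by
  rw [Subgroup.mem_sup]
  constructor
  · rintro ⟨_, ⟨x, rfl⟩, _, ⟨y, rfl⟩, hxy⟩
    exact ⟨x, y, x.ne_zero, y.ne_zero, by simpa using congrArg Units.val hxy.symm⟩
  · rintro ⟨x, y, hx0, hy0, rfl⟩
    exact ⟨_, ⟨Units.mk0 x hx0, rfl⟩, _, ⟨Units.mk0 y hy0, rfl⟩, Units.ext (by simp)⟩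

end GroupWithZero

theorem stmt_17_general (p m k l : ℕ) (hp : p.Prime) (hk : 0 < k)
    (heven : Even (Nat.gcd m l / Nat.gcd m (Nat.gcd k l)))
    {L : Type*} [Field L] [Fintype L] (hL : Fintype.card L = p ^ m) :
    Nat.gcd (p ^ k + 1) (Nat.gcd (p ^ l - 1) (p ^ m - 1))
        = p ^ Nat.gcd m (Nat.gcd k l) + 1 ∧
    (∃ α : L, α ≠ 0 ∧ ¬ ∃ w : L, w ≠ 0 ∧ α = w ^ (p ^ Nat.gcd m (Nat.gcd k l) + 1)) ∧
    (∀ α : L, α ≠ 0 →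
      ((∃ x y : L, x ≠ 0 ∧ y ≠ 0 ∧ α = x ^ (p ^ k + 1) * y ^ (p ^ l - 1)) ↔
        ∃ w : L, w ≠ 0 ∧ α = w ^ (p ^ Nat.gcd m (Nat.gcd k l) + 1))) := by
  have he : Nat.gcd k (Nat.gcd l m) = Nat.gcd m (Nat.gcd k l) := by
    rw [Nat.gcd_comm l m, Nat.gcd_left_comm]
  have hgcd : Nat.gcd (p ^ k + 1) (Nat.gcd (p ^ l - 1) (p ^ m - 1))
      = p ^ Nat.gcd m (Nat.gcd k l) + 1 := by
    rw [Nat.pow_sub_one_gcd_pow_sub_one,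
      Nat.gcd_pow_add_one_pow_sub_one hp.pos hk (by rwa [he, Nat.gcd_comm l m]), he]
  have hcard : Nat.card Lˣ = p ^ m - 1 := by rw [Nat.card_units, Nat.card_eq_fintype_card, hL]
  have hrange : (powMonoidHom (p ^ k + 1) : Lˣ →* Lˣ).range ⊔ (powMonoidHom (p ^ l - 1)).range
      = (powMonoidHom (p ^ Nat.gcd m (Nat.gcd k l) + 1)).range := by
    rw [range_powMonoidHom_sup_range_powMonoidHom,
      range_powMonoidHom_eq_range_gcd (fun _ => pow_card_eq_one'), hcard, Nat.gcd_assoc, hgcd]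
  refine ⟨hgcd, ?_, fun α hα => by
    rw [← Units.mk0_mem_range_powMonoidHom_sup_iff hα, hrange,
      Units.mk0_mem_range_powMonoidHom_iff]⟩
  have hdvd : p ^ Nat.gcd m (Nat.gcd k l) + 1 ∣ Nat.card Lˣ := by
    rw [hcard, ← hgcd]
    exact (Nat.gcd_dvd_right _ _).trans (Nat.gcd_dvd_right _ _)
  obtain ⟨α, -, hα⟩ := SetLike.exists_of_lt
    (IsCyclic.range_powMonoidHom_ne_top hdvd (by simp [hp.ne_zero])).lt_top
  refine ⟨α, α.ne_zero, ?_⟩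
  rwa [← Units.mk0_mem_range_powMonoidHom_iff α.ne_zero, Units.mk0_val]

theorem stmt_17 (p m k l : ℕ) (hp : p.Prime) (hk : 0 < k) (hkm : k < m)
    (hl : 0 < l) (hlm : l < m)
    (heven : Even (Nat.gcd m l / Nat.gcd m (Nat.gcd k l)))
    {L : Type*} [Field L] [Fintype L] (hL : Fintype.card L = p ^ m) :
    Nat.gcd (p ^ k + 1) (Nat.gcd (p ^ l - 1) (p ^ m - 1))
        = p ^ Nat.gcd m (Nat.gcd k l) + 1 ∧
    (∃ α : L, α ≠ 0 ∧ ¬ ∃ w : L, w ≠ 0 ∧ α = w ^ (p ^ Nat.gcd m (Nat.gcd k l) + 1)) ∧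
    (∀ α : L, α ≠ 0 →
      ((∃ x y : L, x ≠ 0 ∧ y ≠ 0 ∧ α = x ^ (p ^ k + 1) * y ^ (p ^ l - 1)) ↔
        ∃ w : L, w ≠ 0 ∧ α = w ^ (p ^ Nat.gcd m (Nat.gcd k l) + 1))) :=
  stmt_17_general p m k l hp hk heven hL
end

section
/- Let L = F_{p^m}, σ(x) = x^(p^k) with fixed field K, η ∈ L with N_{L:K}(η) ≠ 1, and let T_a (a ∈ L*) be invertible σ-semilinear transformations of L² with T_a + T_b = T_{a+b} and each T_a irreducible (no nontrivial invariant L-subspace). Define x ∘ y = y₀·x + η·T_{y₁}(x) + det(M_{T_{y₁}})^{σ^{-1}}·T_{y₁}^{-1}(x) for y = (y₀, y₁), with the T_{y₁}-terms interpreted as 0 when y₁ = 0. Then for every y ≠ 0, the map x ↦ x ∘ y is a bijection of L². -/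
/-- The σ-semilinear map on `L²` with matrix entries `c₁ a, c₂ a, c₃ a, c₄ a`. -/
def semilinMap {L : Type*} [Field L] (σ : L ≃+* L) (c₁ c₂ c₃ c₄ : L → L)
    (a : L) (x : L × L) : L × L :=
  (c₁ a * σ x.1 + c₂ a * σ x.2, c₃ a * σ x.1 + c₄ a * σ x.2)

/-
Fix `y = (y₀, y₁)` with `y₁ ≠ 0`, let `T = T_{y₁}` have matrix `M` and `Δ = det M`. Since
`T (Δ^{σ⁻¹} T⁻¹ x) = Δ x`, applying `T` to `x ∘ y = 0` gives `Δ x + y₀^σ T x + η^σ T² x = 0`.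
For `x ≠ 0` irreducibility makes `x, T x` a basis, so `d = det(x, T x) ≠ 0`; pairing the relation
with `T x` and using `det(T u, T v) = Δ · det(u, v)^σ` gives `(η d)^σ = d`. Thus
`η = d^{σ⁻¹} / d` has norm `η^{(q-1)/(|K|-1)} = 1`. Hence `x ↦ x ∘ y` is an additive injection of
the finite set `L²`, so a bijection. For `y₁ = 0`, additivity forces `T_0 = 0` and `x ∘ y = y₀ x`.
-/

section FixedNorm

variable {L : Type*} [Field L] [Finite L] (σ : L ≃+* L)

lemma map_pow_card_sub_one_div (z : L) :
    σ (z ^ ((Nat.card L - 1) / (Nat.card {x : L // σ x = x} - 1)))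
      = z ^ ((Nat.card L - 1) / (Nat.card {x : L // σ x = x} - 1)) := by
  let K := (σ : L →+* L).eqLocusField (RingHom.id L)
  have hK : Nat.card K = Nat.card {x : L // σ x = x} := rfl
  rw [← hK, ← FiniteField.algebraMap_norm_eq_pow]
  exact (Algebra.norm K z).2

lemma pow_card_sub_one_div_eq_one_of_mul_eq_symm {η d : L} (hd : d ≠ 0)
    (h : η * d = σ.symm d) :
    η ^ ((Nat.card L - 1) / (Nat.card {x : L // σ x = x} - 1)) = 1 := by
  have hη : η = σ.symm d / d := by rw [eq_div_iff hd, h]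
  have hfix := map_pow_card_sub_one_div σ d
  rw [hη, div_pow, ← map_pow, σ.symm_apply_eq.2 hfix.symm, div_self (pow_ne_zero _ hd)]

end FixedNorm

def det2 {L : Type*} [CommRing L] (u v : L × L) : L := u.1 * v.2 - u.2 * v.1

section Semilinear

variable {L : Type*} [Field L] (σ : L ≃+* L) (c₁ c₂ c₃ c₄ : L → L) (a : L)

/-- `x ↦ det(M)^{σ⁻¹} T⁻¹(x) = σ⁻¹(adj(M) x)`, where `M` is the matrix of
`T = semilinMap σ c₁ c₂ c₃ c₄ a`. -/
def adjMap (x : L × L) : L × L :=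
  (σ.symm (c₄ a) * σ.symm x.1 - σ.symm (c₂ a) * σ.symm x.2,
    -(σ.symm (c₃ a)) * σ.symm x.1 + σ.symm (c₁ a) * σ.symm x.2)

lemma semilinMap_add (x y : L × L) :
    semilinMap σ c₁ c₂ c₃ c₄ a (x + y)
      = semilinMap σ c₁ c₂ c₃ c₄ a x + semilinMap σ c₁ c₂ c₃ c₄ a y := by
  simp only [semilinMap, Prod.fst_add, Prod.snd_add, map_add, Prod.mk_add_mk]
  congr 1 <;> ring

lemma semilinMap_smul (k : L) (x : L × L) :
    semilinMap σ c₁ c₂ c₃ c₄ a (k • x) = σ k • semilinMap σ c₁ c₂ c₃ c₄ a x := by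
  simp only [semilinMap, Prod.smul_fst, Prod.smul_snd, smul_eq_mul, map_mul, Prod.smul_mk]
  congr 1 <;> ring

lemma semilinMap_zero : semilinMap σ c₁ c₂ c₃ c₄ a 0 = 0 := by
  simp [semilinMap]

lemma adjMap_add (x y : L × L) :
    adjMap σ c₁ c₂ c₃ c₄ a (x + y) = adjMap σ c₁ c₂ c₃ c₄ a x + adjMap σ c₁ c₂ c₃ c₄ a y := by
  simp only [adjMap, Prod.fst_add, Prod.snd_add, map_add, Prod.mk_add_mk]
  congr 1 <;> ring

lemma semilinMap_adjMap (x : L × L) :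
    semilinMap σ c₁ c₂ c₃ c₄ a (adjMap σ c₁ c₂ c₃ c₄ a x)
      = (c₁ a * c₄ a - c₂ a * c₃ a) • x := by
  simp only [semilinMap, adjMap, map_add, map_sub, map_mul, map_neg, σ.apply_symm_apply]
  ext <;> simp only [Prod.smul_fst, Prod.smul_snd, smul_eq_mul] <;> ring

lemma det2_semilinMap (u v : L × L) :
    det2 (semilinMap σ c₁ c₂ c₃ c₄ a u) (semilinMap σ c₁ c₂ c₃ c₄ a v)
      = (c₁ a * c₄ a - c₂ a * c₃ a) * σ (det2 u v) := by
  simp only [det2, semilinMap, map_sub, map_mul]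
  ring

lemma mem_span_singleton_of_det2_eq_zero {x w : L × L} (hx : x ≠ 0) (h : det2 x w = 0) :
    w ∈ Submodule.span L {x} := by
  rw [Submodule.mem_span_singleton]
  unfold det2 at h
  rcases ne_or_eq x.1 0 with h1 | h1
  · refine ⟨w.1 / x.1, Prod.ext (div_mul_cancel₀ _ h1) ?_⟩
    simp only [Prod.smul_snd, smul_eq_mul]
    field_simp
    linear_combination -h
  · have h2 : x.2 ≠ 0 := fun h2 => hx (Prod.ext h1 h2)
    refine ⟨w.2 / x.2, Prod.ext ?_ (div_mul_cancel₀ _ h2)⟩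
    simp only [Prod.smul_fst, smul_eq_mul, h1, mul_zero]
    simpa [h1, h2, eq_comm] using h

lemma det2_semilinMap_ne_zero
    (hirr : ∀ W : Submodule L (L × L),
      (∀ v ∈ W, semilinMap σ c₁ c₂ c₃ c₄ a v ∈ W) → W = ⊥ ∨ W = ⊤)
    {x : L × L} (hx : x ≠ 0) : det2 x (semilinMap σ c₁ c₂ c₃ c₄ a x) ≠ 0 := by
  intro h
  have hinv : ∀ v ∈ Submodule.span L {x},
      semilinMap σ c₁ c₂ c₃ c₄ a v ∈ Submodule.span L {x} := by
    intro v hv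
    obtain ⟨k, rfl⟩ := Submodule.mem_span_singleton.1 hv
    rw [semilinMap_smul]
    exact Submodule.smul_mem _ _ (mem_span_singleton_of_det2_eq_zero hx h)
  rcases hirr _ hinv with hbot | htop
  · exact hx (Submodule.span_singleton_eq_bot.1 hbot)
  · have hrank := finrank_span_singleton (K := L) hx
    rw [htop, finrank_top, Module.finrank_prod, Module.finrank_self] at hrank
    omega

end Semilinear

section Circ

variable {L : Type*} [Field L] (σ : L ≃+* L) (η : L) (c₁ c₂ c₃ c₄ : L → L)

/-- `circ σ η c₁ c₂ c₃ c₄ y` is `x ↦ x ∘ y`. -/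
def circ (y : L × L) : L × L →+ L × L where
  toFun x := y.1 • x + η • semilinMap σ c₁ c₂ c₃ c₄ y.2 x + adjMap σ c₁ c₂ c₃ c₄ y.2 x
  map_zero' := by simp [semilinMap_zero, adjMap]
  map_add' x x' := by
    simp only [semilinMap_add, adjMap_add, smul_add]
    abel

lemma circ_of_snd_eq_zero
    (hadd : ∀ a b : L, ∀ x : L × L,
      semilinMap σ c₁ c₂ c₃ c₄ a x + semilinMap σ c₁ c₂ c₃ c₄ b x
        = semilinMap σ c₁ c₂ c₃ c₄ (a + b) x)
    {y : L × L} (hy : y.2 = 0) (x : L × L) : circ σ η c₁ c₂ c₃ c₄ y x = y.1 • x := by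
  have hT (x : L × L) : semilinMap σ c₁ c₂ c₃ c₄ 0 x = 0 := by simpa using hadd 0 0 x
  have h10 := hT (1, 0)
  have h01 := hT (0, 1)
  simp only [semilinMap, map_one, map_zero, mul_one, mul_zero, add_zero, zero_add,
    Prod.mk_eq_zero] at h10 h01
  simp [circ, hy, hT, adjMap, h10, h01]

lemma eq_zero_of_circ_eq_zero [Finite L] {y : L × L}
    (hdet : c₁ y.2 * c₄ y.2 - c₂ y.2 * c₃ y.2 ≠ 0)
    (hirr : ∀ W : Submodule L (L × L),
      (∀ v ∈ W, semilinMap σ c₁ c₂ c₃ c₄ y.2 v ∈ W) → W = ⊥ ∨ W = ⊤)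
    (hη : η ^ ((Nat.card L - 1) / (Nat.card {x : L // σ x = x} - 1)) ≠ 1)
    {x : L × L} (hx : circ σ η c₁ c₂ c₃ c₄ y x = 0) : x = 0 := by
  by_contra hx0
  set T := semilinMap σ c₁ c₂ c₃ c₄ y.2
  set Δ := c₁ y.2 * c₄ y.2 - c₂ y.2 * c₃ y.2
  have hd : det2 x (T x) ≠ 0 := det2_semilinMap_ne_zero σ c₁ c₂ c₃ c₄ y.2 hirr hx0
  have hTx : σ y.1 • T x + σ η • T (T x) + Δ • x = 0 := by
    rw [← semilinMap_adjMap, ← semilinMap_smul, ← semilinMap_smul, ← semilinMap_add,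
      ← semilinMap_add]
    exact (congrArg T hx).trans (semilinMap_zero σ c₁ c₂ c₃ c₄ y.2)
  have key : Δ * (σ (η * det2 x (T x)) - det2 x (T x)) = 0 := by
    have h := congrArg (det2 (T x)) hTx
    have hTT : det2 (T x) (T (T x)) = Δ * σ (det2 x (T x)) :=
      det2_semilinMap σ c₁ c₂ c₃ c₄ y.2 x (T x)
    simp only [det2, Prod.fst_add, Prod.snd_add, Prod.smul_fst, Prod.smul_snd, smul_eq_mul,
      Prod.fst_zero, Prod.snd_zero] at h hTT ⊢
    rw [map_mul]
    linear_combination h - σ η * hTT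
  have hηd : η * det2 x (T x) = σ.symm (det2 x (T x)) :=
    σ.eq_symm_apply.2 (sub_eq_zero.1 ((mul_eq_zero.1 key).resolve_left hdet))
  exact hη (pow_card_sub_one_div_eq_one_of_mul_eq_symm σ hd hηd)

end Circ

theorem stmt_18 {L : Type*} [Field L] [Fintype L] (σ : L ≃+* L) (η : L)
    (hη : η ^ ((Fintype.card L - 1) / (Nat.card {x : L // σ x = x} - 1)) ≠ 1)
    (c₁ c₂ c₃ c₄ : L → L)
    (hadd : ∀ a b : L, ∀ x : L × L,
      semilinMap σ c₁ c₂ c₃ c₄ a x + semilinMap σ c₁ c₂ c₃ c₄ b x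
        = semilinMap σ c₁ c₂ c₃ c₄ (a + b) x)
    (hdet : ∀ a : L, a ≠ 0 → c₁ a * c₄ a - c₂ a * c₃ a ≠ 0)
    (hirr : ∀ a : L, a ≠ 0 → ∀ W : Submodule L (L × L),
      (∀ v ∈ W, semilinMap σ c₁ c₂ c₃ c₄ a v ∈ W) → W = ⊥ ∨ W = ⊤) :
    ∀ y : L × L, y ≠ 0 →
      Function.Bijective (fun x : L × L =>
        y.1 • x + η • semilinMap σ c₁ c₂ c₃ c₄ y.2 x +
          ((σ.symm (c₄ y.2) * σ.symm x.1 - σ.symm (c₂ y.2) * σ.symm x.2,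
            -(σ.symm (c₃ y.2)) * σ.symm x.1 + σ.symm (c₁ y.2) * σ.symm x.2) : L × L)) := by
  intro y hy
  rw [Fintype.card_eq_nat_card] at hη
  refine Finite.injective_iff_bijective.1
    ((injective_iff_map_eq_zero (circ σ η c₁ c₂ c₃ c₄ y)).2 fun x hx => ?_)
  rcases eq_or_ne y.2 0 with h0 | ha
  · have hy₁ : y.1 ≠ 0 := fun h₁ => hy (Prod.ext h₁ h0)
    rw [circ_of_snd_eq_zero σ η c₁ c₂ c₃ c₄ hadd h0] at hx
    exact (smul_eq_zero.1 hx).resolve_left hy₁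
  · exact eq_zero_of_circ_eq_zero σ η c₁ c₂ c₃ c₄ (hdet _ ha) (hirr _ ha) hη hx
end

section
/- Let L = F_{p^m}, σ and τ automorphisms of L, α ∈ L* such that for every a ∈ L* the σ-semilinear map T_a(x₀, x₁) = (a·α·σ(x₁), τ(a)·σ(x₀)) is irreducible on L². Define on V = L² the multiplication (x₀, x₁) ∘ (y₀, y₁) = y₀·(x₀, x₁) + T_{y₁}(x₀, x₁) (with T_0 = 0). Then (V, +, ∘) has no zero divisors: x ∘ y = 0 implies x = 0 or y = 0. -/
/-!
If `T_{y₁} x = -y₀ • x` with `y₁ ≠ 0` and `x ≠ 0`, then the line `L ∙ x` is invariant under the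
semilinear map `T_{y₁}`, which irreducibility forbids since `L ∙ x` is neither `⊥` nor all of `L²`.
When `y₁ = 0` the product is plain scalar multiplication.
-/

section Semilinear

variable {K V : Type*} [DivisionRing K] [AddCommGroup V] [Module K V] {σ : K →+* K}

theorem Submodule.mapsTo_span_singleton_of_apply_eq_smul (f : V →ₛₗ[σ] V) {x : V} {c : K}
    (hfx : f x = c • x) : ∀ v ∈ K ∙ x, f v ∈ K ∙ x := by
  intro v hv
  obtain ⟨d, rfl⟩ := Submodule.mem_span_singleton.mp hv
  rw [f.map_smulₛₗ, hfx, smul_smul]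
  exact Submodule.smul_mem _ _ (Submodule.mem_span_singleton_self x)

theorem eq_zero_of_apply_eq_smul_of_irreducible (hV : Module.finrank K V ≠ 1) (f : V →ₛₗ[σ] V)
    (hirr : ∀ W : Submodule K V, (∀ v ∈ W, f v ∈ W) → W = ⊥ ∨ W = ⊤)
    {x : V} {c : K} (hfx : f x = c • x) : x = 0 := by
  by_contra hx
  rcases hirr _ (Submodule.mapsTo_span_singleton_of_apply_eq_smul f hfx) with hbot | htop
  · exact hx (Submodule.span_singleton_eq_bot.mp hbot)
  · apply hV
    rw [← finrank_top K V, ← htop, finrank_span_singleton hx]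

end Semilinear

/-- The paper's `T_a`. -/
def twistedSwap {L : Type*} [Field L] (σ τ : L ≃+* L) (α a : L) :
    L × L →ₛₗ[(σ : L →+* L)] L × L where
  toFun v := (a * α * σ v.2, τ a * σ v.1)
  map_add' v w := by simp only [Prod.fst_add, Prod.snd_add, map_add, mul_add, Prod.mk_add_mk]
  map_smul' c v := by
    simp only [Prod.smul_fst, Prod.smul_snd, smul_eq_mul, map_mul, Prod.smul_mk, RingHom.coe_coe]
    congr 1 <;> ring

theorem stmt_19_general {L : Type*} [Field L] (σ τ : L ≃+* L) (α : L)
    (hirr : ∀ a : L, a ≠ 0 → ∀ W : Submodule L (L × L),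
      (∀ v ∈ W, ((a * α * σ v.2, τ a * σ v.1) : L × L) ∈ W) → W = ⊥ ∨ W = ⊤) :
    ∀ x y : L × L,
      y.1 • x + ((y.2 * α * σ x.2, τ y.2 * σ x.1) : L × L) = 0 →
      x = 0 ∨ y = 0 := by
  intro x y h
  by_cases hy₂ : y.2 = 0
  · simp only [hy₂, zero_mul, map_zero, Prod.mk_zero_zero, add_zero, smul_eq_zero] at h
    exact h.symm.imp_right fun hy₁ => Prod.ext hy₁ hy₂
  · left
    have hT : twistedSwap σ τ α y.2 x = (-y.1) • x := by
      rw [neg_smul, eq_neg_iff_add_eq_zero, add_comm]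
      exact h
    have hdim : Module.finrank L (L × L) ≠ 1 := by simp [Module.finrank_prod]
    exact eq_zero_of_apply_eq_smul_of_irreducible hdim _ (hirr y.2 hy₂) hT

theorem stmt_19 {L : Type*} [Field L] [Fintype L] (σ τ : L ≃+* L) (α : L) (hα : α ≠ 0)
    (hirr : ∀ a : L, a ≠ 0 → ∀ W : Submodule L (L × L),
      (∀ v ∈ W, ((a * α * σ v.2, τ a * σ v.1) : L × L) ∈ W) → W = ⊥ ∨ W = ⊤) :
    ∀ x y : L × L,
      y.1 • x + ((y.2 * α * σ x.2, τ y.2 * σ x.1) : L × L) = 0 →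
      x = 0 ∨ y = 0 :=
  stmt_19_general σ τ α hirr
end
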